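/- Let β be a nonzero algebraic integer, K = ℚ(β), and 𝓞 the ring of integers of K. Then there exists h ∈ ℕ such that for every x ∈ ℤ[β,β⁻¹]: if there exists y ∈ ℤ[β] with y − x ∈ β^h·𝓞, then x ∈ ℤ[β]. -/

import Mathlib

/-!
Some nonzero integer `c` (the discriminant of the power basis `1, β, …, β^(d-1)`) satisfies
`c𝓞 ⊆ ℤ[β]`. As `𝓞/c𝓞` is finite, some power `e = β^n` with `n ≥ 1` is idempotent modulo `c𝓞`,
so `e^(m+1) z - e z ∈ c𝓞 ⊆ ℤ[β]` for every integral `z`. Given `y - x = e z` with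
`x ∈ ℤ[β,β⁻¹]`, some `β^m (y - x)` lies in `ℤ[β]`, hence so does
`e^(m+1) z = β^(nm - m) β^m (y - x)`, and therefore `y - x` and `x` do.
-/

open NumberField

theorem exists_isIdempotentElem_pow {M : Type*} [Monoid M] [Finite M] (x : M) :
    ∃ n, 0 < n ∧ IsIdempotentElem (x ^ n) := by
  obtain ⟨a, b, hab, hpow⟩ := Finite.exists_ne_map_eq_of_infinite (fun k : ℕ => x ^ k)
  wlog hlt : a < b generalizing a b
  · exact this b a hab.symm hpow.symm (by omega)
  obtain ⟨p, rfl⟩ := Nat.exists_eq_add_of_lt hlt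
  have periodic : ∀ k, x ^ (a + k * (p + 1)) = x ^ a := by
    intro k
    induction k with
    | zero => simp
    | succ k ih => rw [add_mul, one_mul, ← add_assoc, pow_add, ih, ← pow_add]; exact hpow.symm
  refine ⟨(a + 1) * (p + 1), by positivity, ?_⟩
  obtain ⟨t, ht⟩ := Nat.exists_eq_add_of_le' (show a ≤ (a + 1) * (p + 1) by nlinarith)
  calc x ^ ((a + 1) * (p + 1)) * x ^ ((a + 1) * (p + 1))
      = x ^ t * x ^ (a + (a + 1) * (p + 1)) := by rw [← pow_add, ← pow_add, ht, add_assoc]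
    _ = x ^ ((a + 1) * (p + 1)) := by rw [periodic, ← pow_add, ht]

theorem Ideal.exists_pow_mul_sub_pow_mem {R : Type*} [CommRing R] (I : Ideal R)
    [Finite (R ⧸ I)] (b : R) : ∃ n, 0 < n ∧ ∀ k, 0 < k → b ^ (n * k) - b ^ n ∈ I := by
  obtain ⟨n, hn, hidem⟩ := exists_isIdempotentElem_pow (Ideal.Quotient.mk I b)
  refine ⟨n, hn, fun k hk => Ideal.Quotient.eq.mp ?_⟩
  rw [pow_mul, map_pow, map_pow, hidem.pow_eq hk.ne']

theorem exists_pow_mul_mem_adjoin_of_mem_adjoin_inv {R K : Type*} [CommRing R] [Field K]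
    [Algebra R K] {β x : K} (hx : x ∈ Algebra.adjoin R {β, β⁻¹}) :
    ∃ m : ℕ, β ^ m * x ∈ Algebra.adjoin R {β} := by
  have hβ : β ∈ Algebra.adjoin R {β} := Algebra.self_mem_adjoin_singleton R β
  induction hx using Algebra.adjoin_induction with
  | mem u hu =>
    rcases hu with rfl | rfl
    · exact ⟨0, by simp⟩
    · exact ⟨2, by rwa [pow_two, mul_self_mul_inv]⟩
  | algebraMap r => exact ⟨0, by simp⟩
  | add u v _ _ ihu ihv =>
    obtain ⟨mu, hmu⟩ := ihu
    obtain ⟨mv, hmv⟩ := ihv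
    refine ⟨mu + mv, ?_⟩
    rw [show β ^ (mu + mv) * (u + v) = β ^ mv * (β ^ mu * u) + β ^ mu * (β ^ mv * v) by ring]
    exact add_mem (mul_mem (pow_mem hβ mv) hmu) (mul_mem (pow_mem hβ mu) hmv)
  | mul u v _ _ ihu ihv =>
    obtain ⟨mu, hmu⟩ := ihu
    obtain ⟨mv, hmv⟩ := ihv
    refine ⟨mu + mv, ?_⟩
    rw [show β ^ (mu + mv) * (u * v) = (β ^ mu * u) * (β ^ mv * v) by ring]
    exact mul_mem hmu hmv

theorem exists_intCast_mul_mem_adjoin {K : Type*} [Field K] [NumberField K] {β : K}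
    (hβint : IsIntegral ℤ β) (hgen : IntermediateField.adjoin ℚ ({β} : Set K) = ⊤) :
    ∃ c : ℤ, c ≠ 0 ∧ ∀ z : K, IsIntegral ℤ z → (c : K) * z ∈ Algebra.adjoin ℤ {β} := by
  have hβℚ : IsIntegral ℚ β := hβint.tower_top
  let B := PowerBasis.ofAdjoinEqTop hβℚ
    ((IntermediateField.adjoin_simple_eq_top_iff_of_isAlgebraic hβℚ.isAlgebraic).mp hgen)
  have hdiscr : IsIntegral ℤ (Algebra.discr ℚ B.basis) :=
    Algebra.discr_isIntegral ℚ fun i => by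
      rw [B.basis_eq_pow]; exact hβint.pow _
  obtain ⟨c, hc⟩ := IsIntegrallyClosed.isIntegral_iff.mp hdiscr
  refine ⟨c, ?_, fun z hz => ?_⟩
  · rintro rfl
    exact Algebra.discr_not_zero_of_basis ℚ B.basis (by simpa using hc.symm)
  · have := Algebra.discr_mul_isIntegral_mem_adjoin ℚ (B := B) hβint hz
    rwa [← hc, algebraMap_int_eq, eq_intCast, Int.cast_smul_eq_zsmul, zsmul_eq_mul] at this

theorem exists_pow_mul_sub_pow_mul_mem_adjoin {K : Type*} [Field K] [NumberField K] {β : K}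
    (hβint : IsIntegral ℤ β) (hgen : IntermediateField.adjoin ℚ ({β} : Set K) = ⊤) :
    ∃ n, 0 < n ∧ ∀ k, 0 < k → ∀ z : K, IsIntegral ℤ z →
      β ^ (n * k) * z - β ^ n * z ∈ Algebra.adjoin ℤ {β} := by
  obtain ⟨c, hc0, hcA⟩ := exists_intCast_mul_mem_adjoin hβint hgen
  have : Finite (𝓞 K ⧸ Ideal.span {(c : 𝓞 K)}) :=
    Ideal.finiteQuotientOfFreeOfNeBot _ (by simpa using hc0)
  obtain ⟨βO, hβO⟩ : ∃ βO : 𝓞 K, (βO : K) = β := ⟨⟨β, hβint⟩, rfl⟩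
  obtain ⟨n, hn, hper⟩ := (Ideal.span {(c : 𝓞 K)}).exists_pow_mul_sub_pow_mem βO
  refine ⟨n, hn, fun k hk z hz => ?_⟩
  obtain ⟨δ, hδ⟩ := Ideal.mem_span_singleton'.mp (hper k hk)
  have hδK : β ^ (n * k) - β ^ n = c * (δ : K) := by
    simpa [hβO, mul_comm] using congrArg ((↑) : 𝓞 K → K) hδ.symm
  rw [← sub_mul, hδK, mul_assoc]
  exact hcA _ (δ.isIntegral_coe.mul hz)

theorem mem_zbeta_of_close_to_zbeta_general (K : Type*) [Field K] [NumberField K]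
    (β : K) (hβint : IsIntegral ℤ β)
    (hgen : IntermediateField.adjoin ℚ ({β} : Set K) = ⊤) :
    ∃ h : ℕ, ∀ x ∈ Algebra.adjoin ℤ ({β, β⁻¹} : Set K),
      (∃ y ∈ Algebra.adjoin ℤ ({β} : Set K), ∃ z : K, IsIntegral ℤ z ∧ y - x = β ^ h * z) →
      x ∈ Algebra.adjoin ℤ ({β} : Set K) := by
  obtain ⟨n, hn, hper⟩ := exists_pow_mul_sub_pow_mul_mem_adjoin hβint hgen
  refine ⟨n, fun x hx ⟨y, hy, z, hz, hyz⟩ => ?_⟩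
  have hy' : y ∈ Algebra.adjoin ℤ ({β, β⁻¹} : Set K) :=
    Algebra.adjoin_mono (by simp) hy
  obtain ⟨m, hm⟩ := exists_pow_mul_mem_adjoin_of_mem_adjoin_inv (sub_mem hy' hx)
  obtain ⟨t, ht⟩ := Nat.exists_eq_add_of_le' (Nat.le_mul_of_pos_left m hn)
  have hlift : β ^ (n * (m + 1)) * z = β ^ t * (β ^ m * (y - x)) := by
    rw [hyz, ← mul_assoc, ← mul_assoc, ← pow_add, ← pow_add, ← ht, mul_add_one]
  have hw : y - x ∈ Algebra.adjoin ℤ ({β} : Set K) := by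
    rw [show y - x = β ^ t * (β ^ m * (y - x)) - (β ^ (n * (m + 1)) * z - β ^ n * z) by
      rw [← hlift, hyz]; ring]
    exact sub_mem (mul_mem (pow_mem (Algebra.self_mem_adjoin_singleton ℤ β) t) hm)
      (hper _ m.succ_pos z hz)
  simpa using sub_mem hy hw

/-- For a nonzero algebraic integer `β` generating the number field `K = ℚ(β)`,
there is `h ∈ ℕ` such that for every `x ∈ ℤ[β,β⁻¹]`: if some `y ∈ ℤ[β]` satisfies
`y − x ∈ β^h·𝓞` (where `𝓞` is the ring of integers of `K`, i.e. the integral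
closure of `ℤ` in `K`), then `x ∈ ℤ[β]`. -/
theorem mem_zbeta_of_close_to_zbeta (K : Type*) [Field K] [NumberField K]
    (β : K) (hβ0 : β ≠ 0) (hβint : IsIntegral ℤ β)
    (hgen : IntermediateField.adjoin ℚ ({β} : Set K) = ⊤) :
    ∃ h : ℕ, ∀ x ∈ Algebra.adjoin ℤ ({β, β⁻¹} : Set K),
      (∃ y ∈ Algebra.adjoin ℤ ({β} : Set K), ∃ z : K, IsIntegral ℤ z ∧ y - x = β ^ h * z) →
      x ∈ Algebra.adjoin ℤ ({β} : Set K) :=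
  mem_zbeta_of_close_to_zbeta_general K β hβint hgen
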